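/- Let v, w, ψ be a numerical solution of the semi-discrete energy-dissipative DG scheme for the (v,w) formulation with periodic boundary conditions; that is, for every t ∈ [0,T] and all test functions φ, η, ζ ∈ X^p_Δx(Ω): (i) Σ_{j=1}^N [ ∫_{Ω_j} ∂_tv·φ dx + ∫_{Ω_j} c(ψ)·w·∂_xφ dx − ( c̄_{j+1/2}·w̄_{j+1/2} + (1/2)s_{j+1/2}·⟦v⟧_{j+1/2} )·φ⁻_{j+1/2} + ( c̄_{j−1/2}·w̄_{j−1/2} + (1/2)s_{j−1/2}·⟦v⟧_{j−1/2} )·φ⁺_{j−1/2} ] = Σ_{j=1}^N [ ∫_{Ω_j} c(ψ)·∂_x(wφ) dx − c̄_{j+1/2}·w⁻_{j+1/2}·φ⁻_{j+1/2} + c̄_{j−1/2}·w⁺_{j−1/2}·φ⁺_{j−1/2} − ε_j ∫_{Ω_j} ∂_xv·∂_xφ dx ]; (ii) Σ_{j=1}^N [ ∫_{Ω_j} ∂_tw·η dx + ∫_{Ω_j} c(ψ)·v·∂_xη dx − ( c̄_{j+1/2}·v̄_{j+1/2} + (1/2)s_{j+1/2}·⟦w⟧_{j+1/2} )·η⁻_{j+1/2}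 + ( c̄_{j−1/2}·v̄_{j−1/2} + (1/2)s_{j−1/2}·⟦w⟧_{j−1/2} )·η⁺_{j−1/2} ] = − Σ_{j=1}^N ε_j ∫_{Ω_j} ∂_xw·∂_xη dx; (iii) Σ_{j=1}^N ∫_{Ω_j} ∂_tψ·ζ dx = Σ_{j=1}^N ∫_{Ω_j} v·ζ dx; where s_{j+1/2}(t) = max{ c(ψ⁻_{j+1/2}(t)), c(ψ⁺_{j+1/2}(t)) } ≥ 0 and ε_j(t) ≥ 0. Then the discrete energy t ↦ Σ_{j=1}^N ∫_{Ω_j} ( v(t,x)² + w(t,x)² )/2 dx is non-increasing: its time derivative equals −(1/2) Σ_{j=1}^N s_{j+1/2}( ⟦v⟧²_{j+1/2} + ⟦w⟧²_{j+1/2} ) − Σ_{j=1}^N ε_j ∫_{Ω_j} ((∂_xv)² + (∂_xw)²) dx ≤ 0 for every t ∈ [0,T]. -/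

import Mathlib

open Finset

noncomputable section

/-- The wave speed `c(u) = √(α cos²u + β sin²u)`. -/
def waveC (α β u : ℝ) : ℝ :=
  Real.sqrt (α * Real.cos u ^ 2 + β * Real.sin u ^ 2)

/-- Left endpoint `x_{j-1/2}` of cell `Ω_j`. -/
def cellL {N : ℕ} (x : Fin (N + 1) → ℝ) (j : Fin N) : ℝ := x j.castSucc

/-- Right endpoint `x_{j+1/2}` of cell `Ω_j`. -/
def cellR {N : ℕ} (x : Fin (N + 1) → ℝ) (j : Fin N) : ℝ := x j.succ

/-- Minus (left) trace `u⁻_{j+1/2}` of the grid function `u` at the interface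
to the right of cell `j`, at time `t`. -/
def trM {N : ℕ} (x : Fin (N + 1) → ℝ) (u : Fin N → ℝ → ℝ → ℝ) (t : ℝ) (j : Fin N) : ℝ :=
  u j t (cellR x j)

/-- Plus (right) trace `u⁺_{j+1/2}` at the interface to the right of cell `j`
(cell indices are periodic: the cell to the right of cell `j` is `j + 1` in `Fin N`). -/
def trP {N : ℕ} [NeZero N] (x : Fin (N + 1) → ℝ) (u : Fin N → ℝ → ℝ → ℝ) (t : ℝ) (j : Fin N) : ℝ :=
  u (j + 1) t (cellL x (j + 1))

/-- Interface average `ū_{j+1/2} = (u⁺ + u⁻)/2`. -/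
def avgI {N : ℕ} [NeZero N] (x : Fin (N + 1) → ℝ) (u : Fin N → ℝ → ℝ → ℝ) (t : ℝ) (j : Fin N) : ℝ :=
  (trP x u t j + trM x u t j) / 2

/-- Interface jump `⟦u⟧_{j+1/2} = u⁺ − u⁻`. -/
def jmpI {N : ℕ} [NeZero N] (x : Fin (N + 1) → ℝ) (u : Fin N → ℝ → ℝ → ℝ) (t : ℝ) (j : Fin N) : ℝ :=
  trP x u t j - trM x u t j

/-- Averaged interface wave speed `c̄_{j+1/2} = (c(ψ⁺) + c(ψ⁻))/2`. -/
def cbarI {N : ℕ} [NeZero N] (α β : ℝ) (x : Fin (N + 1) → ℝ)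
    (ψ : Fin N → ℝ → ℝ → ℝ) (t : ℝ) (j : Fin N) : ℝ :=
  (waveC α β (trP x ψ t j) + waveC α β (trM x ψ t j)) / 2

/-- Maximal local wave velocity `s_{j+1/2} = max{c(ψ⁻), c(ψ⁺)}`. -/
def sMaxI {N : ℕ} [NeZero N] (α β : ℝ) (x : Fin (N + 1) → ℝ)
    (ψ : Fin N → ℝ → ℝ → ℝ) (t : ℝ) (j : Fin N) : ℝ :=
  max (waveC α β (trM x ψ t j)) (waveC α β (trP x ψ t j))

/-- `f : ℝ → ℝ` is (the cell restriction of) a polynomial of degree `≤ p`,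
i.e. the cell belongs to the space `X^p_Δx`. -/
def IsPolyDeg (p : ℕ) (f : ℝ → ℝ) : Prop :=
  ∃ q : Polynomial ℝ, q.natDegree ≤ p ∧ ∀ y : ℝ, f y = q.eval y


/-!
Test the `v`-equation with `φ = v(t)` and the `w`-equation with `η = w(t)` and add them: the
left-hand sides become the time derivative of the energy (differentiation under the integral).
The volume terms `∫ c(ψ) w v_x + ∫ c(ψ) v w_x` cancel against `∫ c(ψ) (w v)_x` pointwise, without
any integration by parts. After the periodic shift `j - 1 ↦ j`, every interface carries the
same quadratic form in the four traces `v^±, w^±`; its central `c̄`-part vanishes identically,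
leaving only the upwind penalty `-(s/2)(⟦v⟧² + ⟦w⟧²)`, while the shock-capturing terms give
`-ε ∫ (v_x² + w_x²)`.
-/
theorem IsPolyDeg.contDiff {p : ℕ} {f : ℝ → ℝ} (hf : IsPolyDeg p f) (n : WithTop ℕ∞) :
    ContDiff ℝ n f := by
  obtain ⟨q, -, hq⟩ := hf
  simpa [funext hq, Polynomial.coe_aeval_eq_eval] using q.contDiff_aeval (𝕜 := ℝ) n

theorem IsPolyDeg.exists_polynomial_family {N p : ℕ} {u : Fin N → ℝ → ℝ}
    (hu : ∀ j, IsPolyDeg p (u j)) :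
    ∃ q : Fin N → Polynomial ℝ, (∀ j, (q j).natDegree ≤ p) ∧ ∀ j y, (q j).eval y = u j y := by
  choose q hdeg hq using hu
  exact ⟨q, hdeg, fun j y => (hq j y).symm⟩

theorem continuous_waveC (α β : ℝ) : Continuous (waveC α β) := by
  unfold waveC
  fun_prop

theorem waveC_nonneg (α β u : ℝ) : 0 ≤ waveC α β u :=
  Real.sqrt_nonneg _

theorem cellL_le_cellR {N : ℕ} {x : Fin (N + 1) → ℝ} (hx : Monotone x) (j : Fin N) :
    cellL x j ≤ cellR x j :=
  hx (Fin.castSucc_le_succ j)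

theorem hasDerivAt_fderiv_uncurry_apply {F : ℝ → ℝ → ℝ}
    (hF : ContDiff ℝ 1 (Function.uncurry F)) (s y : ℝ) :
    HasDerivAt (fun s' => F s' y) (fderiv ℝ (Function.uncurry F) (s, y) (1, 0)) s :=
  (hF.differentiable one_ne_zero (s, y)).hasFDerivAt.comp_hasDerivAt (x := s)
    (f := fun s' : ℝ => (s', y)) ((hasDerivAt_id s).prodMk (hasDerivAt_const s y))

theorem hasDerivAt_intervalIntegral_of_contDiff {F : ℝ → ℝ → ℝ}
    (hF : ContDiff ℝ 1 (Function.uncurry F)) (a b t : ℝ) :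
    HasDerivAt (fun s => ∫ y in a..b, F s y) (∫ y in a..b, deriv (fun s => F s y) t) t := by
  set F' : ℝ × ℝ → ℝ := fun q => fderiv ℝ (Function.uncurry F) q (1, 0)
  have hF' : Continuous F' :=
    (ContinuousLinearMap.apply ℝ ℝ ((1 : ℝ), (0 : ℝ))).continuous.comp
      (hF.continuous_fderiv one_ne_zero)
  have hFs : ∀ s, Continuous (F s) := fun s => hF.continuous.comp (Continuous.prodMk_right s)
  obtain ⟨M, hM⟩ := ((isCompact_closedBall t 1).prod isCompact_uIcc).exists_bound_of_continuousOn
    (s := Metric.closedBall t 1 ×ˢ Set.uIcc a b) hF'.continuousOn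
  have h := intervalIntegral.hasDerivAt_integral_of_dominated_loc_of_deriv_le
    (μ := MeasureTheory.volume) (F := F) (F' := fun s y => F' (s, y)) (bound := fun _ => M)
    (Metric.ball_mem_nhds t one_pos)
    (Filter.Eventually.of_forall fun s => (hFs s).aestronglyMeasurable)
    ((hFs t).intervalIntegrable a b)
    (hF'.comp (Continuous.prodMk_right t)).aestronglyMeasurable
    (Filter.Eventually.of_forall fun y hy s hs => hM (s, y)
      ⟨Metric.ball_subset_closedBall hs, Set.uIoc_subset_uIcc hy⟩)
    intervalIntegrable_const
    (Filter.Eventually.of_forall fun y _ s _ => hasDerivAt_fderiv_uncurry_apply hF s y)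
  refine h.2.congr_deriv (intervalIntegral.integral_congr fun y _ => ?_)
  exact ((hasDerivAt_fderiv_uncurry_apply hF t y).deriv).symm

theorem hasDerivAt_intervalIntegral_sq_half {u : ℝ → ℝ → ℝ}
    (hu : ContDiff ℝ 1 (Function.uncurry u)) (a b t : ℝ) :
    HasDerivAt (fun s => ∫ y in a..b, u s y ^ 2 / 2)
      (∫ y in a..b, deriv (fun s => u s y) t * u t y) t := by
  have hsq : ContDiff ℝ 1 (Function.uncurry fun s y => u s y ^ 2 / 2) := (hu.pow 2).div_const 2
  refine (hasDerivAt_intervalIntegral_of_contDiff hsq a b t).congr_deriv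
    (intervalIntegral.integral_congr fun y _ => ?_)
  have hut := (hasDerivAt_fderiv_uncurry_apply hu t y).differentiableAt.hasDerivAt
  rw [((hut.fun_pow 2).div_const 2).deriv]
  push_cast
  ring

theorem hasDerivAt_sum_intervalIntegral_sq_add_sq_half {ι : Type*} [Fintype ι]
    {v w : ι → ℝ → ℝ → ℝ} (hv : ∀ j, ContDiff ℝ 1 (Function.uncurry (v j)))
    (hw : ∀ j, ContDiff ℝ 1 (Function.uncurry (w j))) (a b : ι → ℝ) (t : ℝ) :
    HasDerivAt (fun s => ∑ j, ∫ y in a j..b j, (v j s y ^ 2 + w j s y ^ 2) / 2)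
      ((∑ j, ∫ y in a j..b j, deriv (fun s => v j s y) t * v j t y)
        + ∑ j, ∫ y in a j..b j, deriv (fun s => w j s y) t * w j t y) t := by
  have hint : ∀ (u : ι → ℝ → ℝ → ℝ), (∀ j, ContDiff ℝ 1 (Function.uncurry (u j))) →
      ∀ j s, IntervalIntegrable (fun y => u j s y ^ 2 / 2) MeasureTheory.volume (a j) (b j) :=
    fun u hu j s => (((hu j).continuous.comp (Continuous.prodMk_right s)).pow 2
      |>.div_const 2).intervalIntegrable _ _
  have hsplit : (fun s => ∑ j, ∫ y in a j..b j, (v j s y ^ 2 + w j s y ^ 2) / 2)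
      = fun s => ∑ j, ((∫ y in a j..b j, v j s y ^ 2 / 2) + ∫ y in a j..b j, w j s y ^ 2 / 2) := by
    funext s
    refine sum_congr rfl fun j _ => ?_
    rw [← intervalIntegral.integral_add (hint v hv j s) (hint w hw j s)]
    simp only [add_div]
  rw [hsplit, ← sum_add_distrib]
  exact HasDerivAt.fun_sum fun j _ =>
    (hasDerivAt_intervalIntegral_sq_half (hv j) _ _ t).add
      (hasDerivAt_intervalIntegral_sq_half (hw j) _ _ t)

theorem sum_intervalIntegral_mul_deriv_mul {ι : Type*} [Fintype ι] {c f g : ι → ℝ → ℝ}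
    (hc : ∀ j, Continuous (c j)) (hf : ∀ j, ContDiff ℝ 1 (f j)) (hg : ∀ j, ContDiff ℝ 1 (g j))
    (a b : ι → ℝ) :
    ∑ j, ∫ y in a j..b j, c j y * deriv (fun z => f j z * g j z) y
      = (∑ j, ∫ y in a j..b j, c j y * f j y * deriv (g j) y)
        + ∑ j, ∫ y in a j..b j, c j y * g j y * deriv (f j) y := by
  rw [← sum_add_distrib]
  refine sum_congr rfl fun j _ => ?_
  have hf' := (hf j).continuous_deriv le_rfl
  have hg' := (hg j).continuous_deriv le_rfl
  rw [← intervalIntegral.integral_add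
    (((hc j).fun_mul (hf j).continuous |>.fun_mul hg').intervalIntegrable _ _)
    (((hc j).fun_mul (hg j).continuous |>.fun_mul hf').intervalIntegrable _ _)]
  refine intervalIntegral.integral_congr fun y _ => ?_
  have hfy := ((hf j).differentiable one_ne_zero y).hasDerivAt
  have hgy := ((hg j).differentiable one_ne_zero y).hasDerivAt
  rw [(hfy.fun_mul hgy).deriv]
  ring

theorem sum_mul_intervalIntegral_sq_add_sq {ι : Type*} [Fintype ι] {f g : ι → ℝ → ℝ}
    (hf : ∀ j, Continuous (f j)) (hg : ∀ j, Continuous (g j)) (c a b : ι → ℝ) :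
    ∑ j, c j * ∫ y in a j..b j, (f j y ^ 2 + g j y ^ 2)
      = (∑ j, c j * ∫ y in a j..b j, f j y * f j y)
        + ∑ j, c j * ∫ y in a j..b j, g j y * g j y := by
  rw [← sum_add_distrib]
  refine sum_congr rfl fun j _ => ?_
  rw [← mul_add, ← intervalIntegral.integral_add (((hf j).fun_mul (hf j)).intervalIntegrable _ _)
    (((hg j).fun_mul (hg j)).intervalIntegrable _ _)]
  simp only [sq]

theorem sum_mul_intervalIntegral_nonneg {ι : Type*} [Fintype ι] {c a b : ι → ℝ}
    {f : ι → ℝ → ℝ} (hab : ∀ j, a j ≤ b j) (hc : ∀ j, 0 ≤ c j) (hf : ∀ j y, 0 ≤ f j y) :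
    0 ≤ ∑ j, c j * ∫ y in a j..b j, f j y :=
  sum_nonneg fun j _ =>
    mul_nonneg (hc j) (intervalIntegral.integral_nonneg (hab j) fun y _ => hf j y)

section InterfaceFlux

variable {N : ℕ} [NeZero N] (α β : ℝ) (x : Fin (N + 1) → ℝ) (ψ v w : Fin N → ℝ → ℝ → ℝ) (t : ℝ)

theorem sum_sub_one_mul_cellL (F : Fin N → ℝ) (u : Fin N → ℝ → ℝ → ℝ) :
    ∑ j, F (j - 1) * u j t (cellL x j) = ∑ j, F j * trP x u t j := by
  rw [← Equiv.sum_comp (Equiv.addRight 1)]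
  simp only [Equiv.coe_addRight, add_sub_cancel_right, trP]

theorem sum_interface_fluxes :
    (∑ j, (cbarI α β x ψ t j * avgI x w t j + 1 / 2 * sMaxI α β x ψ t j * jmpI x v t j)
        * v j t (cellR x j))
      - (∑ j, (cbarI α β x ψ t (j - 1) * avgI x w t (j - 1)
          + 1 / 2 * sMaxI α β x ψ t (j - 1) * jmpI x v t (j - 1)) * v j t (cellL x j))
      + (∑ j, (cbarI α β x ψ t j * avgI x v t j + 1 / 2 * sMaxI α β x ψ t j * jmpI x w t j)
        * w j t (cellR x j))
      - (∑ j, (cbarI α β x ψ t (j - 1) * avgI x v t (j - 1)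
          + 1 / 2 * sMaxI α β x ψ t (j - 1) * jmpI x w t (j - 1)) * w j t (cellL x j))
      - (∑ j, cbarI α β x ψ t j * trM x w t j * v j t (cellR x j))
      + (∑ j, cbarI α β x ψ t (j - 1) * trP x w t (j - 1) * v j t (cellL x j))
      = -(1 / 2) * ∑ j, sMaxI α β x ψ t j * (jmpI x v t j ^ 2 + jmpI x w t j ^ 2) := by
  rw [sum_sub_one_mul_cellL x t (fun j => cbarI α β x ψ t j * avgI x w t j
      + 1 / 2 * sMaxI α β x ψ t j * jmpI x v t j),
    sum_sub_one_mul_cellL x t (fun j => cbarI α β x ψ t j * avgI x v t j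
      + 1 / 2 * sMaxI α β x ψ t j * jmpI x w t j),
    sum_sub_one_mul_cellL x t (fun j => cbarI α β x ψ t j * trP x w t j), mul_sum]
  simp only [← sum_sub_distrib, ← sum_add_distrib]
  refine sum_congr rfl fun j _ => ?_
  simp only [avgI, jmpI, trM]
  ring

end InterfaceFlux

theorem dg_vw_dissipative_energy_general
    (N p : ℕ) [NeZero N] (T α β : ℝ)
    (x : Fin (N + 1) → ℝ) (hx : StrictMono x)
    (v w ψ : Fin N → ℝ → ℝ → ℝ)
    (ε : Fin N → ℝ → ℝ) (hε : ∀ j, ∀ t ∈ Set.Icc (0 : ℝ) T, 0 ≤ ε j t)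
    (hvreg : ∀ j, ContDiff ℝ 1 (Function.uncurry (v j)))
    (hwreg : ∀ j, ContDiff ℝ 1 (Function.uncurry (w j)))
    (hvpoly : ∀ j t, IsPolyDeg p (v j t))
    (hwpoly : ∀ j t, IsPolyDeg p (w j t))
    (hψpoly : ∀ j t, IsPolyDeg p (ψ j t))
    -- scheme equation (i) (the `v`-equation with diffusive flux and
    -- shock-capturing term), for all test functions `φ ∈ X^p_Δx`
    (hscheme1 : ∀ φ : Fin N → Polynomial ℝ, (∀ j, (φ j).natDegree ≤ p) →
      ∀ t ∈ Set.Icc (0 : ℝ) T,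
        (∑ j : Fin N, ∫ y in cellL x j..cellR x j,
            deriv (fun s => v j s y) t * (φ j).eval y)
        + (∑ j : Fin N, ∫ y in cellL x j..cellR x j,
            waveC α β (ψ j t y) * w j t y * deriv (fun z => (φ j).eval z) y)
        - (∑ j : Fin N,
            (cbarI α β x ψ t j * avgI x w t j
              + (1 / 2) * sMaxI α β x ψ t j * jmpI x v t j)
            * (φ j).eval (cellR x j))
        + (∑ j : Fin N,
            (cbarI α β x ψ t (j - 1) * avgI x w t (j - 1)
              + (1 / 2) * sMaxI α β x ψ t (j - 1) * jmpI x v t (j - 1))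
            * (φ j).eval (cellL x j))
        =
        (∑ j : Fin N, ∫ y in cellL x j..cellR x j,
            waveC α β (ψ j t y) * deriv (fun z => w j t z * (φ j).eval z) y)
        - (∑ j : Fin N, cbarI α β x ψ t j * trM x w t j * (φ j).eval (cellR x j))
        + (∑ j : Fin N,
            cbarI α β x ψ t (j - 1) * trP x w t (j - 1) * (φ j).eval (cellL x j))
        - (∑ j : Fin N, ε j t * ∫ y in cellL x j..cellR x j,
            deriv (fun z => v j t z) y * deriv (fun z => (φ j).eval z) y))
    -- scheme equation (ii) (the `w`-equation with diffusive flux and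
    -- shock-capturing term), for all test functions `η ∈ X^p_Δx`
    (hscheme2 : ∀ η : Fin N → Polynomial ℝ, (∀ j, (η j).natDegree ≤ p) →
      ∀ t ∈ Set.Icc (0 : ℝ) T,
        (∑ j : Fin N, ∫ y in cellL x j..cellR x j,
            deriv (fun s => w j s y) t * (η j).eval y)
        + (∑ j : Fin N, ∫ y in cellL x j..cellR x j,
            waveC α β (ψ j t y) * v j t y * deriv (fun z => (η j).eval z) y)
        - (∑ j : Fin N,
            (cbarI α β x ψ t j * avgI x v t j
              + (1 / 2) * sMaxI α β x ψ t j * jmpI x w t j)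
            * (η j).eval (cellR x j))
        + (∑ j : Fin N,
            (cbarI α β x ψ t (j - 1) * avgI x v t (j - 1)
              + (1 / 2) * sMaxI α β x ψ t (j - 1) * jmpI x w t (j - 1))
            * (η j).eval (cellL x j))
        =
        -(∑ j : Fin N, ε j t * ∫ y in cellL x j..cellR x j,
            deriv (fun z => w j t z) y * deriv (fun z => (η j).eval z) y)) :
    ∀ t ∈ Set.Icc (0 : ℝ) T,
      HasDerivAt
        (fun s => ∑ j : Fin N, ∫ y in cellL x j..cellR x j,
          (v j s y ^ 2 + w j s y ^ 2) / 2)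
        (-(1 / 2) * (∑ j : Fin N,
            sMaxI α β x ψ t j * (jmpI x v t j ^ 2 + jmpI x w t j ^ 2))
          - ∑ j : Fin N, ε j t * ∫ y in cellL x j..cellR x j,
              ((deriv (fun z => v j t z) y) ^ 2 + (deriv (fun z => w j t z) y) ^ 2))
        t
      ∧ -(1 / 2) * (∑ j : Fin N,
            sMaxI α β x ψ t j * (jmpI x v t j ^ 2 + jmpI x w t j ^ 2))
          - (∑ j : Fin N, ε j t * ∫ y in cellL x j..cellR x j,
              ((deriv (fun z => v j t z) y) ^ 2 + (deriv (fun z => w j t z) y) ^ 2))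
        ≤ 0 := by
  intro t ht
  obtain ⟨qv, hqv_deg, hqv⟩ := IsPolyDeg.exists_polynomial_family fun j => hvpoly j t
  obtain ⟨qw, hqw_deg, hqw⟩ := IsPolyDeg.exists_polynomial_family fun j => hwpoly j t
  have hv := hscheme1 qv hqv_deg t ht
  have hw := hscheme2 qw hqw_deg t ht
  simp only [hqv] at hv
  simp only [hqw] at hw
  have hvx : ∀ j, ContDiff ℝ 1 (v j t) := fun j => (hvpoly j t).contDiff 1
  have hwx : ∀ j, ContDiff ℝ 1 (w j t) := fun j => (hwpoly j t).contDiff 1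
  have hcψ : ∀ j, Continuous fun y => waveC α β (ψ j t y) :=
    fun j => (continuous_waveC α β).comp ((hψpoly j t).contDiff 0).continuous
  have hcancel := sum_intervalIntegral_mul_deriv_mul hcψ hwx hvx (cellL x) (cellR x)
  have hdiss := sum_mul_intervalIntegral_sq_add_sq (fun j => (hvx j).continuous_deriv le_rfl)
    (fun j => (hwx j).continuous_deriv le_rfl) (fun j => ε j t) (cellL x) (cellR x)
  have hflux := sum_interface_fluxes α β x ψ v w t
  refine ⟨(hasDerivAt_sum_intervalIntegral_sq_add_sq_half hvreg hwreg (cellL x) (cellR x) t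
    ).congr_deriv (by linarith), ?_⟩
  have hjumps : 0 ≤ ∑ j, sMaxI α β x ψ t j * (jmpI x v t j ^ 2 + jmpI x w t j ^ 2) :=
    sum_nonneg fun j _ => mul_nonneg (le_max_of_le_left (waveC_nonneg ..)) (by positivity)
  have hgrads := sum_mul_intervalIntegral_nonneg (fun j => cellL_le_cellR hx.monotone j)
    (fun j => hε j t ht) (fun j y => add_nonneg (sq_nonneg (deriv (fun z => v j t z) y))
      (sq_nonneg (deriv (fun z => w j t z) y)))
  linarith

/-- energy stability for the semi-discrete energy-dissipative DG
scheme based on the `(v,w)` formulation, with periodic boundary conditions: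
the discrete energy `t ↦ Σ_j ∫_{Ω_j} (v² + w²)/2 dx` has derivative
`−(1/2) Σ_j s_{j+1/2}(⟦v⟧² + ⟦w⟧²) − Σ_j ε_j ∫_{Ω_j} (v_x² + w_x²) dx ≤ 0`. -/
theorem dg_vw_dissipative_energy
    (N p : ℕ) [NeZero N] (T α β : ℝ) (hT : 0 < T) (hα : 0 < α) (hβ : 0 < β)
    (x : Fin (N + 1) → ℝ) (hx : StrictMono x)
    (v w ψ : Fin N → ℝ → ℝ → ℝ)
    (ε : Fin N → ℝ → ℝ) (hε : ∀ j, ∀ t ∈ Set.Icc (0 : ℝ) T, 0 ≤ ε j t)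
    (hvreg : ∀ j, ContDiff ℝ 1 (Function.uncurry (v j)))
    (hwreg : ∀ j, ContDiff ℝ 1 (Function.uncurry (w j)))
    (hψreg : ∀ j, ContDiff ℝ 1 (Function.uncurry (ψ j)))
    (hvpoly : ∀ j t, IsPolyDeg p (v j t))
    (hwpoly : ∀ j t, IsPolyDeg p (w j t))
    (hψpoly : ∀ j t, IsPolyDeg p (ψ j t))
    -- scheme equation (i) (the `v`-equation with diffusive flux and
    -- shock-capturing term), for all test functions `φ ∈ X^p_Δx`
    (hscheme1 : ∀ φ : Fin N → Polynomial ℝ, (∀ j, (φ j).natDegree ≤ p) →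
      ∀ t ∈ Set.Icc (0 : ℝ) T,
        (∑ j : Fin N, ∫ y in cellL x j..cellR x j,
            deriv (fun s => v j s y) t * (φ j).eval y)
        + (∑ j : Fin N, ∫ y in cellL x j..cellR x j,
            waveC α β (ψ j t y) * w j t y * deriv (fun z => (φ j).eval z) y)
        - (∑ j : Fin N,
            (cbarI α β x ψ t j * avgI x w t j
              + (1 / 2) * sMaxI α β x ψ t j * jmpI x v t j)
            * (φ j).eval (cellR x j))
        + (∑ j : Fin N,
            (cbarI α β x ψ t (j - 1) * avgI x w t (j - 1)
              + (1 / 2) * sMaxI α β x ψ t (j - 1) * jmpI x v t (j - 1))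
            * (φ j).eval (cellL x j))
        =
        (∑ j : Fin N, ∫ y in cellL x j..cellR x j,
            waveC α β (ψ j t y) * deriv (fun z => w j t z * (φ j).eval z) y)
        - (∑ j : Fin N, cbarI α β x ψ t j * trM x w t j * (φ j).eval (cellR x j))
        + (∑ j : Fin N,
            cbarI α β x ψ t (j - 1) * trP x w t (j - 1) * (φ j).eval (cellL x j))
        - (∑ j : Fin N, ε j t * ∫ y in cellL x j..cellR x j,
            deriv (fun z => v j t z) y * deriv (fun z => (φ j).eval z) y))
    -- scheme equation (ii) (the `w`-equation with diffusive flux and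
    -- shock-capturing term), for all test functions `η ∈ X^p_Δx`
    (hscheme2 : ∀ η : Fin N → Polynomial ℝ, (∀ j, (η j).natDegree ≤ p) →
      ∀ t ∈ Set.Icc (0 : ℝ) T,
        (∑ j : Fin N, ∫ y in cellL x j..cellR x j,
            deriv (fun s => w j s y) t * (η j).eval y)
        + (∑ j : Fin N, ∫ y in cellL x j..cellR x j,
            waveC α β (ψ j t y) * v j t y * deriv (fun z => (η j).eval z) y)
        - (∑ j : Fin N,
            (cbarI α β x ψ t j * avgI x v t j
              + (1 / 2) * sMaxI α β x ψ t j * jmpI x w t j)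
            * (η j).eval (cellR x j))
        + (∑ j : Fin N,
            (cbarI α β x ψ t (j - 1) * avgI x v t (j - 1)
              + (1 / 2) * sMaxI α β x ψ t (j - 1) * jmpI x w t (j - 1))
            * (η j).eval (cellL x j))
        =
        -(∑ j : Fin N, ε j t * ∫ y in cellL x j..cellR x j,
            deriv (fun z => w j t z) y * deriv (fun z => (η j).eval z) y))
    -- scheme equation (iii) (the `ψ`-equation), for all test functions `ζ ∈ X^p_Δx`
    (hscheme3 : ∀ ζ : Fin N → Polynomial ℝ, (∀ j, (ζ j).natDegree ≤ p) →
      ∀ t ∈ Set.Icc (0 : ℝ) T,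
        (∑ j : Fin N, ∫ y in cellL x j..cellR x j,
            deriv (fun s => ψ j s y) t * (ζ j).eval y)
        = ∑ j : Fin N, ∫ y in cellL x j..cellR x j, v j t y * (ζ j).eval y) :
    ∀ t ∈ Set.Icc (0 : ℝ) T,
      HasDerivAt
        (fun s => ∑ j : Fin N, ∫ y in cellL x j..cellR x j,
          (v j s y ^ 2 + w j s y ^ 2) / 2)
        (-(1 / 2) * (∑ j : Fin N,
            sMaxI α β x ψ t j * (jmpI x v t j ^ 2 + jmpI x w t j ^ 2))
          - ∑ j : Fin N, ε j t * ∫ y in cellL x j..cellR x j,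
              ((deriv (fun z => v j t z) y) ^ 2 + (deriv (fun z => w j t z) y) ^ 2))
        t
      ∧ -(1 / 2) * (∑ j : Fin N,
            sMaxI α β x ψ t j * (jmpI x v t j ^ 2 + jmpI x w t j ^ 2))
          - (∑ j : Fin N, ε j t * ∫ y in cellL x j..cellR x j,
              ((deriv (fun z => v j t z) y) ^ 2 + (deriv (fun z => w j t z) y) ^ 2))
        ≤ 0 :=
  dg_vw_dissipative_energy_general N p T α β x hx v w ψ ε hε hvreg hwreg hvpoly hwpoly hψpoly
    hscheme1 hscheme2

end
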